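/- arXiv:1303.0354 — 6 statements merged into one kernel-verified Lean document; each statement's English description precedes it below -/
import Mathlib

section
/- Let d ≥ 1 be an integer, let f : ℝ^d → ℝ be twice continuously differentiable, let μ ∈ ℝ, and suppose Δf(x) − (1/2)⟨x, ∇f(x)⟩ = μ·f(x) for all x ∈ ℝ^d. Then for every natural number k, the function F : ℝ^d × ℝ → ℝ defined by F(x, y) = f(x)·H_k(y/2) satisfies Δ_{ℝ^{d+1}}F(x,y) − (1/2)⟨(x,y), ∇F(x,y)⟩ = (μ − k/2)·F(x,y) for all (x, y) ∈ ℝ^d × ℝ, where the Laplacian and gradient on the left are those of ℝ^{d+1} = ℝ^d × ℝ. -/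
/-!
In terms of Mathlib's probabilists' Hermite polynomials, `H_k(z) = √2^k He_k(√2 z)`, and `He_n`
satisfies `He_n'' = x He_n' - n He_n`: differentiate `He_{n+1} = x He_n - He_n'` and use
`He_{n+1}' = (n+1) He_n`. Rescaling, `y ↦ H_k(y/2)` is an eigenfunction of the one-dimensional
drift Laplacian `g'' - (1/2) y g'` with eigenvalue `-k/2`. The drift Laplacian of `f(x) g(y)` is
`(L f)(x) g(y) + f(x) (L g)(y)`, so eigenvalues of a product add.
-/

/-- The `k`-th physicists' Hermite polynomial (as a function),
`H_k(z) = (−1)^k e^{z²} (d/dz)^k e^{−z²}`. -/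
noncomputable def physHermite (k : ℕ) (z : ℝ) : ℝ :=
  (-1 : ℝ)^k * Real.exp (z^2) * iteratedDeriv k (fun t : ℝ => Real.exp (-t^2)) z

open Polynomial

theorem iteratedDeriv_comp_mul_left {𝕜 E : Type*} [NontriviallyNormedField 𝕜]
    [NormedAddCommGroup E] [NormedSpace 𝕜 E] (n : ℕ) (c : 𝕜) (f : 𝕜 → E) (x : 𝕜) :
    iteratedDeriv n (fun x => f (c * x)) x = c ^ n • iteratedDeriv n f (c * x) := by
  induction n generalizing x with
  | zero => simp
  | succ n ih =>
    rw [iteratedDeriv_succ, funext ih, deriv_fun_const_smul_field,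
      deriv_comp_mul_left c (iteratedDeriv n f), iteratedDeriv_succ, smul_smul, pow_succ]

theorem driftLaplacian_mul_of_eigen {d : ℕ} (f : (Fin d → ℝ) → ℝ) (μ : ℝ)
    (hf : ∀ x : Fin d → ℝ,
      (∑ i, iteratedDeriv 2 (fun t : ℝ => f (Function.update x i t)) (x i))
        - (1/2) * ∑ i, x i * deriv (fun t : ℝ => f (Function.update x i t)) (x i)
      = μ * f x)
    (g : ℝ → ℝ) (ν : ℝ) (hg : ∀ y, iteratedDeriv 2 g y - 1 / 2 * y * deriv g y = ν * g y)
    (x : Fin d → ℝ) (y : ℝ) :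
      ((∑ i, iteratedDeriv 2 (fun t : ℝ => f (Function.update x i t) * g y) (x i))
        + iteratedDeriv 2 (fun t : ℝ => f x * g t) y)
      - (1/2) * ((∑ i, x i * deriv (fun t : ℝ => f (Function.update x i t) * g y) (x i))
        + y * deriv (fun t : ℝ => f x * g t) y)
      = (μ + ν) * (f x * g y) := by
  simp only [iteratedDeriv_mul_const_field, deriv_mul_const_field, ← mul_assoc, ← Finset.sum_mul,
    iteratedDeriv_const_mul_field, deriv_const_mul_field]
  linear_combination g y * hf x + f x * hg y

namespace Polynomial

theorem derivative_hermite_succ (n : ℕ) :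
    derivative (hermite (n + 1)) = (n + 1 : ℕ) * hermite n := by
  induction n with
  | zero => simp
  | succ n ih =>
    rw [hermite_succ (n + 1), derivative_sub, derivative_mul, derivative_X, ih,
      derivative_mul, derivative_natCast, hermite_succ n]
    push_cast
    ring

theorem derivative_derivative_hermite (n : ℕ) :
    derivative (derivative (hermite n)) = X * derivative (hermite n) - (n : ℤ[X]) * hermite n := by
  have h := congrArg derivative (hermite_succ n)
  rw [derivative_hermite_succ, derivative_sub, derivative_mul, derivative_X] at h
  push_cast at h
  linear_combination h

end Polynomial

theorem iteratedDeriv_two_aeval_hermite (n : ℕ) (w : ℝ) :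
    iteratedDeriv 2 (fun w => aeval w (hermite n)) w
      = w * deriv (fun w => aeval w (hermite n)) w - n * aeval w (hermite n) := by
  have hderiv (p : ℤ[X]) : deriv (fun w : ℝ => aeval w p) = fun w => aeval w (derivative p) :=
    funext fun w => Polynomial.deriv_aeval p
  rw [iteratedDeriv_succ, iteratedDeriv_one, hderiv, hderiv, derivative_derivative_hermite]
  simp only [map_sub, map_mul, aeval_X, map_natCast]

theorem physHermite_eq_aeval_hermite (k : ℕ) (z : ℝ) :
    physHermite k z = √2 ^ k * aeval (√2 * z) (hermite k) := by
  have hsq : √2 ^ 2 = 2 := Real.sq_sqrt zero_le_two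
  have hgauss : (fun t : ℝ => Real.exp (-t ^ 2))
      = fun t => (fun y : ℝ => Real.exp (-(y ^ 2 / 2))) (√2 * t) := by
    funext t
    beta_reduce
    rw [mul_pow, hsq]
    ring_nf
  have hexp : Real.exp (z ^ 2) * Real.exp (-((√2 * z) ^ 2 / 2)) = 1 := by
    rw [← Real.exp_add, mul_pow, hsq]
    simp
  have hsign : (-1 : ℝ) ^ k * (-1) ^ k = 1 := by
    rw [← mul_pow, neg_one_mul, neg_neg, one_pow]
  rw [physHermite, hgauss, iteratedDeriv_comp_mul_left k √2 fun y => Real.exp (-(y ^ 2 / 2)),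
    iteratedDeriv_eq_iterate, deriv_gaussian_eq_hermite_mul_gaussian, smul_eq_mul]
  linear_combination (√2 ^ k * aeval (√2 * z) (hermite k)) *
    ((-1) ^ k * (-1) ^ k * hexp + hsign)

theorem iteratedDeriv_two_physHermite_half_sub (k : ℕ) (y : ℝ) :
    iteratedDeriv 2 (fun t => physHermite k (t / 2)) y
        - 1 / 2 * y * deriv (fun t => physHermite k (t / 2)) y
      = -(k / 2) * physHermite k (y / 2) := by
  set c := √2 / 2
  have hc : c ^ 2 = 1 / 2 := by
    rw [div_pow, Real.sq_sqrt zero_le_two]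
    norm_num
  have hG (t : ℝ) : physHermite k (t / 2) = √2 ^ k * aeval (c * t) (hermite k) := by
    rw [physHermite_eq_aeval_hermite, mul_div_assoc', div_mul_eq_mul_div]
  simp only [hG]
  rw [iteratedDeriv_const_mul_field, deriv_const_mul_field,
    iteratedDeriv_comp_mul_left 2 c (fun w => aeval w (hermite k)),
    deriv_comp_mul_left c (fun w => aeval w (hermite k)), smul_eq_mul, smul_eq_mul,
    iteratedDeriv_two_aeval_hermite]
  linear_combination (√2 ^ k * (c * y * deriv (fun w => aeval w (hermite k)) (c * y)
    - k * aeval (c * y) (hermite k))) * hc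

theorem stmt2_general (d : ℕ) (f : (Fin d → ℝ) → ℝ) (μ : ℝ)
    (heq : ∀ x : Fin d → ℝ,
      (∑ i, iteratedDeriv 2 (fun t : ℝ => f (Function.update x i t)) (x i))
        - (1/2) * ∑ i, x i * deriv (fun t : ℝ => f (Function.update x i t)) (x i)
      = μ * f x)
    (k : ℕ) :
    ∀ (x : Fin d → ℝ) (y : ℝ),
      ((∑ i, iteratedDeriv 2
            (fun t : ℝ => f (Function.update x i t) * physHermite k (y/2)) (x i))
        + iteratedDeriv 2 (fun t : ℝ => f x * physHermite k (t/2)) y)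
      - (1/2) * ((∑ i, x i * deriv
            (fun t : ℝ => f (Function.update x i t) * physHermite k (y/2)) (x i))
        + y * deriv (fun t : ℝ => f x * physHermite k (t/2)) y)
      = (μ - (k : ℝ)/2) * (f x * physHermite k (y/2)) := by
  intro x y
  rw [sub_eq_add_neg μ]
  exact driftLaplacian_mul_of_eigen f μ heq (fun t => physHermite k (t / 2)) (-(k / 2))
    (iteratedDeriv_two_physHermite_half_sub k) x y

/-- If `f : ℝ^d → ℝ` is `C²` and satisfies `Δf − (1/2)⟨x,∇f⟩ = μ f`, then
`F(x,y) = f(x)·H_k(y/2)` satisfies `Δ_{ℝ^{d+1}}F − (1/2)⟨(x,y),∇F⟩ = (μ − k/2)·F`. -/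
theorem stmt2 (d : ℕ) (hd : 1 ≤ d) (f : (Fin d → ℝ) → ℝ) (hf : ContDiff ℝ 2 f) (μ : ℝ)
    (heq : ∀ x : Fin d → ℝ,
      (∑ i, iteratedDeriv 2 (fun t : ℝ => f (Function.update x i t)) (x i))
        - (1/2) * ∑ i, x i * deriv (fun t : ℝ => f (Function.update x i t)) (x i)
      = μ * f x)
    (k : ℕ) :
    ∀ (x : Fin d → ℝ) (y : ℝ),
      ((∑ i, iteratedDeriv 2
            (fun t : ℝ => f (Function.update x i t) * physHermite k (y/2)) (x i))
        + iteratedDeriv 2 (fun t : ℝ => f x * physHermite k (t/2)) y)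
      - (1/2) * ((∑ i, x i * deriv
            (fun t : ℝ => f (Function.update x i t) * physHermite k (y/2)) (x i))
        + y * deriv (fun t : ℝ => f x * physHermite k (t/2)) y)
      = (μ - (k : ℝ)/2) * (f x * physHermite k (y/2)) :=
  stmt2_general d f μ heq k
end

section
/- Let a < √2 be a real number. There is no twice differentiable function g : ℝ → ℝ such that g''(x) − (x/2)·g'(x) + g(x) = 0 for all x ∈ (a, ∞) and g(x) > 0 for all x ∈ (a, ∞). -/
/-!
The polynomial `h x = x² - 2` solves `y'' - (x/2) y' + y = 0` and vanishes at `√2`. By Abel's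
identity the Wronskian `W = h g' - h' g` of `h` and a solution `g` is `W(√2) · exp ((x² - 2)/4)`,
and `W(√2) = -2√2 g(√2) < 0` when `g > 0`. Hence `(g/h)' = W/h² ≤ W(√2)/32` on `(√2, ∞)`, because
the exponential outgrows `h²`, so `g/h` eventually becomes negative although `g, h > 0` there.
-/

open Real Set

noncomputable def wronskian (f g : ℝ → ℝ) (x : ℝ) : ℝ :=
  f x * deriv g x - deriv f x * g x

theorem hasDerivAt_wronskian_of_ode {f g : ℝ → ℝ} {x p q : ℝ}
    (hf : DifferentiableAt ℝ f x) (hf' : DifferentiableAt ℝ (deriv f) x)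
    (hg : DifferentiableAt ℝ g x) (hg' : DifferentiableAt ℝ (deriv g) x)
    (hf'' : deriv (deriv f) x = p * deriv f x - q * f x)
    (hg'' : deriv (deriv g) x = p * deriv g x - q * g x) :
    HasDerivAt (wronskian f g) (p * wronskian f g x) x := by
  have h := (hf.hasDerivAt.mul hg'.hasDerivAt).sub (hf'.hasDerivAt.mul hg.hasDerivAt)
  refine h.congr_deriv ?_
  rw [wronskian, hf'', hg'']
  ring

theorem eq_mul_exp_of_hasDerivAt_eq_mul {W p P : ℝ → ℝ} {s : Set ℝ} (hs : IsOpen s)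
    (hs' : IsPreconnected s) (hW : ∀ x ∈ s, HasDerivAt W (p x * W x) x)
    (hP : ∀ x ∈ s, HasDerivAt P (p x) x) {x₀ x : ℝ} (hx₀ : x₀ ∈ s) (hx : x ∈ s) :
    W x = W x₀ * exp (P x - P x₀) := by
  have hV : ∀ y ∈ s, HasDerivAt (fun y => W y * exp (-P y)) 0 y := fun y hy => by
    refine ((hW y hy).mul ((hP y hy).neg.exp)).congr_deriv ?_
    ring
  have hconst : W x * exp (-P x) = W x₀ * exp (-P x₀) :=
    hs.is_const_of_deriv_eq_zero hs' (fun y hy => (hV y hy).differentiableAt.differentiableWithinAt)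
      (fun y hy => (hV y hy).deriv) hx hx₀
  calc W x = W x * exp (-P x) * exp (P x) := by rw [mul_assoc, ← exp_add]; simp
    _ = W x₀ * exp (P x - P x₀) := by rw [hconst, mul_assoc, ← exp_add]; ring_nf

theorem exists_neg_of_hasDerivAt_le_neg {u u' : ℝ → ℝ} {b ε : ℝ} (hε : 0 < ε)
    (hu : ∀ x ∈ Ioi b, HasDerivAt u (u' x) x) (hu' : ∀ x ∈ Ioi b, u' x ≤ -ε) :
    ∃ x ∈ Ioi b, u x < 0 := by
  set x₀ := b + 1
  set x₁ := x₀ + (|u x₀| + 1) / ε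
  have hx₀ : x₀ ∈ Ioi b := by simp [x₀]
  have hx₀₁ : x₀ ≤ x₁ := le_add_of_nonneg_right (by positivity)
  have hx₁ : x₁ ∈ Ioi b := lt_of_lt_of_le hx₀ hx₀₁
  refine ⟨x₁, hx₁, ?_⟩
  have hmvt := (convex_Ioi b).image_sub_le_mul_sub_of_deriv_le
    (fun x hx => (hu x hx).continuousAt.continuousWithinAt)
    (fun x hx => (hu x (interior_subset hx)).differentiableAt.differentiableWithinAt)
    (fun x hx => (hu x (interior_subset hx)).deriv ▸ hu' x (interior_subset hx)) x₀ hx₀ x₁ hx₁ hx₀₁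
  have : -ε * (x₁ - x₀) = -(|u x₀| + 1) := by
    simp only [x₁]; field_simp; ring
  linarith [le_abs_self (u x₀)]

theorem hasDerivAt_div_wronskian {f g : ℝ → ℝ} {x : ℝ} (hf : DifferentiableAt ℝ f x)
    (hg : DifferentiableAt ℝ g x) (hx : f x ≠ 0) :
    HasDerivAt (fun y => g y / f y) (wronskian f g x / f x ^ 2) x := by
  refine (hg.hasDerivAt.div hf.hasDerivAt hx).congr_deriv ?_
  rw [wronskian]
  ring

theorem deriv_sq_sub_two : deriv (fun x : ℝ => x ^ 2 - 2) = fun x => 2 * x := by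
  ext x
  simp

theorem mul_exp_div_sq_le {c t : ℝ} (hc : c ≤ 0) (ht : 0 < t) :
    c * exp (t / 4) / t ^ 2 ≤ c / 32 := by
  have hexp : t ^ 2 / 32 ≤ exp (t / 4) := by
    have := pow_div_factorial_le_exp (t / 4) (by positivity) 2
    norm_num [Nat.factorial] at this
    linarith
  rw [div_le_div_iff₀ (by positivity) (by norm_num)]
  nlinarith

/-- For `a < √2` there is no twice differentiable `g : ℝ → ℝ` with
`g'' − (x/2)g' + g = 0` and `g > 0` on `(a, ∞)`. -/
theorem stmt5 (a : ℝ) (ha : a < Real.sqrt 2) :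
    ¬ ∃ g : ℝ → ℝ, Differentiable ℝ g ∧ Differentiable ℝ (deriv g) ∧
      (∀ x ∈ Set.Ioi a, deriv (deriv g) x - (x/2) * deriv g x + g x = 0) ∧
      (∀ x ∈ Set.Ioi a, 0 < g x) := by
  rintro ⟨g, hg, hg', hode, hpos⟩
  set h : ℝ → ℝ := fun x => x ^ 2 - 2
  set W := wronskian h g
  have hW : ∀ x ∈ Ioi a, HasDerivAt W (x / 2 * W x) x := fun x hx =>
    hasDerivAt_wronskian_of_ode (q := 1) (by fun_prop)
      (by simp only [h, deriv_sq_sub_two]; fun_prop) (hg x) (hg' x)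
      (by simp only [h, deriv_sq_sub_two, deriv_const_mul_id']; ring) (by linarith [hode x hx])
  have hWexp : ∀ x ∈ Ioi a, W x = W √2 * exp ((x ^ 2 - 2) / 4) := fun x hx => by
    rw [eq_mul_exp_of_hasDerivAt_eq_mul (P := fun x => x ^ 2 / 4) isOpen_Ioi isPreconnected_Ioi hW
      (fun x _ => ((hasDerivAt_pow 2 x).div_const 4).congr_deriv (by ring)) ha hx,
      sq_sqrt zero_le_two]
    ring_nf
  have hW0 : W √2 < 0 := by
    have : 0 < √2 * g √2 := mul_pos (by positivity) (hpos _ ha)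
    simp only [W, wronskian, h, deriv_sq_sub_two, sq_sqrt zero_le_two]
    linarith
  have hh : ∀ x ∈ Ioi √2, 0 < h x := fun x hx => by
    simpa only [h, sub_pos] using (sqrt_lt' ((sqrt_nonneg 2).trans_lt hx)).1 hx
  obtain ⟨x, hx, hneg⟩ := exists_neg_of_hasDerivAt_le_neg (ε := -(W √2 / 32)) (by linarith)
    (fun x hx => hasDerivAt_div_wronskian (by fun_prop) (hg x) (hh x hx).ne')
    (fun x hx => by
      rw [neg_neg, show wronskian h g x = W x from rfl, hWexp x (ha.trans hx)]
      exact mul_exp_div_sq_le hW0.le (hh x hx))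
  exact hneg.not_gt (div_pos (hpos x (ha.trans hx)) (hh x hx))
end

section
/- C = √2 is the unique positive real number with the following property: each of the three intervals (−∞, −C), (−C, C), and (C, ∞) admits a twice differentiable function g, defined and strictly positive on that interval, satisfying g''(x) − (x/2)·g'(x) + g(x) = 0 on that interval. -/
/-- The set `s` admits a strictly positive, twice differentiable solution of
`g'' − (x/2)g' + g = 0` on `s`. -/
def HasPosJacobi (s : Set ℝ) : Prop :=
  ∃ g : ℝ → ℝ, ∀ x ∈ s,
    DifferentiableAt ℝ g x ∧ DifferentiableAt ℝ (deriv g) x ∧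
    deriv (deriv g) x - (x/2) * deriv g x + g x = 0 ∧ 0 < g x

/-! The function `u = x² - 2` solves `g'' - (x/2)g' + g = 0`, and by Abel's identity the
weighted Wronskian `e^{-x²/4}(u' g - u g')` of any solution `g` with `u` is constant on an
interval. At `x = ±√2` it equals `e^{-1/2} · 2x · g(x)`, so a positive solution cannot live
on an interval containing both `±√2`; this rules out `C > √2`. If `C < √2`, the Wronskian is
a positive constant `c` on `(C, ∞)`, hence `(g/u)' = -c e^{x²/4}/u² ≤ -c/32` on `(√2, ∞)`,
so `g/u` cannot stay positive there. For `C = √2` the functions `±(x² - 2)` are positive on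
the three intervals. -/

open Real Set

def IsJacobiSolutionAt (g : ℝ → ℝ) (x : ℝ) : Prop :=
  DifferentiableAt ℝ g x ∧ DifferentiableAt ℝ (deriv g) x ∧
    deriv (deriv g) x - (x / 2) * deriv g x + g x = 0

theorem hasPosJacobi_iff {s : Set ℝ} :
    HasPosJacobi s ↔ ∃ g : ℝ → ℝ, ∀ x ∈ s, IsJacobiSolutionAt g x ∧ 0 < g x := by
  simp only [HasPosJacobi, IsJacobiSolutionAt, and_assoc]

theorem isJacobiSolutionAt_const_mul_sq_sub_two (a x : ℝ) :
    IsJacobiSolutionAt (fun y => a * (y ^ 2 - 2)) x := by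
  have hd (y : ℝ) : HasDerivAt (fun y => a * (y ^ 2 - 2)) (2 * a * y) y := by
    simpa [mul_comm, mul_left_comm, mul_assoc] using
      ((hasDerivAt_pow 2 y).sub_const 2).const_mul a
  have hd' : deriv (fun y => a * (y ^ 2 - 2)) = fun y => 2 * a * y := funext fun y => (hd y).deriv
  have hd2 : HasDerivAt (fun y => 2 * a * y) (2 * a) x := by
    simpa using (hasDerivAt_id x).const_mul (2 * a)
  refine ⟨(hd x).differentiableAt, ?_, ?_⟩
  · rw [hd']; exact hd2.differentiableAt
  · rw [hd', hd2.deriv]; ring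

theorem hasPosJacobi_of_forall_pos {s : Set ℝ} (a : ℝ) (h : ∀ x ∈ s, 0 < a * (x ^ 2 - 2)) :
    HasPosJacobi s :=
  hasPosJacobi_iff.2 ⟨_, fun x hx => ⟨isJacobiSolutionAt_const_mul_sq_sub_two a x, h x hx⟩⟩

noncomputable def weightedWronskian (g : ℝ → ℝ) (x : ℝ) : ℝ :=
  exp (-(x ^ 2) / 4) * (2 * x * g x - (x ^ 2 - 2) * deriv g x)

theorem hasDerivAt_weightedWronskian {g : ℝ → ℝ} {x : ℝ} (h : IsJacobiSolutionAt g x) :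
    HasDerivAt (weightedWronskian g) 0 x := by
  obtain ⟨hg, hg', hode⟩ := h
  have hexp :
      HasDerivAt (fun y => exp (-(y ^ 2) / 4)) (exp (-(x ^ 2) / 4) * (-(2 * x) / 4)) x := by
    simpa using ((hasDerivAt_pow 2 x).neg.div_const 4).exp
  have h1 := ((hasDerivAt_id x).const_mul 2).fun_mul hg.hasDerivAt
  have h2 := ((hasDerivAt_pow 2 x).sub_const 2).fun_mul hg'.hasDerivAt
  refine (hexp.fun_mul (h1.fun_sub h2)).congr_deriv ?_
  simp only [id]
  linear_combination (-Real.exp (-(x ^ 2) / 4) * (x ^ 2 - 2)) * hode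

theorem weightedWronskian_eq_of_isPreconnected {s : Set ℝ} (hs : IsOpen s)
    (hs' : IsPreconnected s) {g : ℝ → ℝ} (hg : ∀ x ∈ s, IsJacobiSolutionAt g x)
    {x y : ℝ} (hx : x ∈ s) (hy : y ∈ s) :
    weightedWronskian g x = weightedWronskian g y :=
  hs.is_const_of_deriv_eq_zero hs'
    (fun z hz => (hasDerivAt_weightedWronskian (hg z hz)).differentiableAt.differentiableWithinAt)
    (fun z hz => (hasDerivAt_weightedWronskian (hg z hz)).deriv) hx hy

theorem weightedWronskian_of_sq_eq_two (g : ℝ → ℝ) {x : ℝ} (hx : x ^ 2 = 2) :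
    weightedWronskian g x = exp (-(x ^ 2) / 4) * (2 * x * g x) := by
  simp [weightedWronskian, hx]

theorem hasDerivAt_div_sq_sub_two {g : ℝ → ℝ} {x : ℝ} (hg : DifferentiableAt ℝ g x)
    (hx : x ^ 2 ≠ 2) :
    HasDerivAt (fun y => g y / (y ^ 2 - 2))
      (-(exp (x ^ 2 / 4) * weightedWronskian g x) / (x ^ 2 - 2) ^ 2) x := by
  have hu : HasDerivAt (fun y : ℝ => y ^ 2 - 2) (2 * x) x := by
    simpa using (hasDerivAt_pow 2 x).sub_const 2
  refine (hg.hasDerivAt.fun_div hu (sub_ne_zero.2 hx)).congr_deriv ?_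
  have hexp : exp (x ^ 2 / 4) * exp (-(x ^ 2) / 4) = 1 := by
    rw [← exp_add]; ring_nf; exact exp_zero
  rw [weightedWronskian, ← mul_assoc (exp _), hexp]
  ring

theorem sq_sub_two_sq_le_exp (x : ℝ) : (x ^ 2 - 2) ^ 2 ≤ 32 * exp (x ^ 2 / 4) := by
  have := quadratic_le_exp_of_nonneg (by positivity : 0 ≤ x ^ 2 / 4)
  nlinarith [sq_nonneg x]

theorem exists_nonpos_of_deriv_le_neg {f f' : ℝ → ℝ} {a ε : ℝ} (hε : 0 < ε)
    (hf : ∀ x ∈ Ioi a, HasDerivAt f (f' x) x) (hf' : ∀ x ∈ Ioi a, f' x ≤ -ε) :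
    ∃ x ∈ Ioi a, f x ≤ 0 := by
  set b := a + 1
  have hb : b ∈ Ioi a := lt_add_one a
  set x := b + |f b| / ε + 1
  have hbx : b ≤ x := by have := div_nonneg (abs_nonneg (f b)) hε.le; linarith
  have hx : x ∈ Ioi a := lt_of_lt_of_le hb hbx
  have hmvt : f x - f b ≤ -ε * (x - b) :=
    (convex_Ioi a).image_sub_le_mul_sub_of_deriv_le
      (fun y hy => (hf y hy).continuousAt.continuousWithinAt)
      (fun y hy => (hf y (interior_subset hy)).differentiableAt.differentiableWithinAt)
      (fun y hy => (hf y (interior_subset hy)).deriv ▸ hf' y (interior_subset hy)) b hb x hx hbx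
  refine ⟨x, hx, ?_⟩
  have hεx : -ε * (x - b) = -|f b| - ε := by simp only [x]; field_simp; ring
  linarith [le_abs_self (f b)]

theorem not_hasPosJacobi_of_sqrt_two_mem {s : Set ℝ} (hs : IsOpen s) (hs' : IsPreconnected s)
    (hpos : √2 ∈ s) (hneg : -√2 ∈ s) : ¬ HasPosJacobi s := by
  intro h
  obtain ⟨g, hg⟩ := hasPosJacobi_iff.1 h
  have h2 : √2 ^ 2 = 2 := sq_sqrt zero_le_two
  have hW := weightedWronskian_eq_of_isPreconnected hs hs' (fun x hx => (hg x hx).1) hpos hneg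
  rw [weightedWronskian_of_sq_eq_two g h2,
    weightedWronskian_of_sq_eq_two g (by rw [neg_sq, h2])] at hW
  have hsqrt : 0 < √2 := by positivity
  have hW_pos : 0 < exp (-(√2 ^ 2) / 4) * (2 * √2 * g √2) :=
    mul_pos (exp_pos _) (mul_pos (by positivity) (hg _ hpos).2)
  have hW_neg : exp (-((-√2) ^ 2) / 4) * (2 * -√2 * g (-√2)) < 0 :=
    mul_neg_of_pos_of_neg (exp_pos _) (mul_neg_of_neg_of_pos (by linarith) (hg _ hneg).2)
  linarith

theorem not_hasPosJacobi_Ioi_of_lt_sqrt_two {C : ℝ} (hC : C < √2) :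
    ¬ HasPosJacobi (Ioi C) := by
  intro h
  obtain ⟨g, hg⟩ := hasPosJacobi_iff.1 h
  have hsqrt : √2 ∈ Ioi C := hC
  have hc : 0 < weightedWronskian g √2 := by
    rw [weightedWronskian_of_sq_eq_two g (sq_sqrt zero_le_two)]
    exact mul_pos (exp_pos _) (mul_pos (by positivity) (hg _ hsqrt).2)
  set c := weightedWronskian g √2
  have hsub : Ioi √2 ⊆ Ioi C := Ioi_subset_Ioi hC.le
  have hsq : ∀ x ∈ Ioi √2, 2 < x ^ 2 := fun x hx =>
    (sqrt_lt' ((sqrt_nonneg 2).trans_lt hx)).1 hx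
  have hslope : ∀ x ∈ Ioi √2,
      -(exp (x ^ 2 / 4) * weightedWronskian g x) / (x ^ 2 - 2) ^ 2 ≤ -(c / 32) := by
    intro x hx
    have hWx : weightedWronskian g x = c :=
      weightedWronskian_eq_of_isPreconnected isOpen_Ioi isPreconnected_Ioi
        (fun y hy => (hg y hy).1) (hsub hx) hsqrt
    have hu : 0 < (x ^ 2 - 2) ^ 2 := by have := hsq x hx; positivity
    rw [hWx, neg_div, neg_le_neg_iff, le_div_iff₀ hu]
    nlinarith [sq_sub_two_sq_le_exp x]
  obtain ⟨x, hx, hle⟩ := exists_nonpos_of_deriv_le_neg (by positivity)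
    (fun x hx => hasDerivAt_div_sq_sub_two (hg x (hsub hx)).1.1 (hsq x hx).ne') hslope
  exact hle.not_gt (div_pos (hg x (hsub hx)).2 (sub_pos.2 (hsq x hx)))

/-- `C = √2` is the unique positive real such that each of `(−∞,−C)`, `(−C,C)`, `(C,∞)`
admits a strictly positive solution of `g'' − (x/2)g' + g = 0`. -/
theorem stmt6 :
    ∀ C : ℝ, 0 < C →
      ((HasPosJacobi (Set.Iio (-C)) ∧ HasPosJacobi (Set.Ioo (-C) C) ∧
          HasPosJacobi (Set.Ioi C)) ↔ C = Real.sqrt 2) := by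
  intro C _
  have h2 : √2 ^ 2 = 2 := sq_sqrt zero_le_two
  have hsqrt : 0 < √2 := by positivity
  constructor
  · rintro ⟨-, hmid, hright⟩
    rcases lt_trichotomy C √2 with hlt | heq | hgt
    · exact absurd hright (not_hasPosJacobi_Ioi_of_lt_sqrt_two hlt)
    · exact heq
    · exact absurd hmid (not_hasPosJacobi_of_sqrt_two_mem isOpen_Ioo isPreconnected_Ioo
        ⟨by linarith, hgt⟩ ⟨by linarith, by linarith⟩)
  · rintro rfl
    refine ⟨hasPosJacobi_of_forall_pos 1 fun x hx => ?_, hasPosJacobi_of_forall_pos (-1)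
      fun x hx => ?_, hasPosJacobi_of_forall_pos 1 fun x hx => ?_⟩
    · have : √2 < -x := by simpa [lt_neg] using hx
      nlinarith
    · obtain ⟨hx₁, hx₂⟩ := hx
      nlinarith
    · have : √2 < x := hx
      nlinarith
end

section
/- Let λ ≥ 2 be an integer and let C be a real number with 0 ≤ C < √(2λ). There is no twice differentiable function f : (C, ∞) → ℝ such that f''(r) + ((λ − 1)/r − r/2)·f'(r) + f(r) = 0 for all r ∈ (C, ∞) and f(r) > 0 for all r ∈ (C, ∞). -/
/-!
The quadratic `g(r) = r² - 2λ` solves `Lg = 0` and vanishes at `r₀ = √(2λ)`. With the integrating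
factor `p(r) = r^(λ-1) e^(-r²/4)` (so `p' = ((λ-1)/r - r/2) p`), Abel's identity makes the weighted
Wronskian `p (f g' - g f')` of a solution `f` with `g` constant on `(C, ∞)`; at `r₀` it equals
`2 r₀ p(r₀) f(r₀) > 0`. Beyond `r₀` this gives `(f/g)' = -c / (p g²)`, and `p g² → 0`, so eventually
`(f/g)' ≤ -1` and `f/g → -∞`, which is impossible for `f > 0`.
-/

open Set Filter Real Topology

theorem hasDerivAt_mul_wronskian_eq_zero {p q s f f' f'' g g' g'' : ℝ → ℝ} {r : ℝ}
    (hp : HasDerivAt p (p r * q r) r)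
    (hf : HasDerivAt f (f' r) r) (hf' : HasDerivAt f' (f'' r) r)
    (hg : HasDerivAt g (g' r) r) (hg' : HasDerivAt g' (g'' r) r)
    (hfode : f'' r + q r * f' r + s r * f r = 0)
    (hgode : g'' r + q r * g' r + s r * g r = 0) :
    HasDerivAt (fun x => p x * (f x * g' x - g x * f' x)) 0 r :=
  (hp.mul ((hf.mul hg').sub (hg.mul hf'))).congr_deriv <| by
    simp only [Pi.sub_apply, Pi.mul_apply]
    linear_combination (p r * f r) * hgode - (p r * g r) * hfode

theorem tendsto_atBot_of_hasDerivAt_le_neg {φ φ' : ℝ → ℝ} {c : ℝ} (hc : 0 < c)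
    (h : ∀ᶠ x in atTop, HasDerivAt φ (φ' x) x ∧ φ' x ≤ -c) : Tendsto φ atTop atBot := by
  obtain ⟨s, hs⟩ := eventually_atTop.mp h
  have hle : ∀ x ≥ s, φ x ≤ φ s + -c * (x - s) := fun x hx => by
    have := (convex_Ici s).image_sub_le_mul_sub_of_deriv_le
      (fun y hy => (hs y hy).1.continuousAt.continuousWithinAt)
      (fun y hy => (hs y (interior_subset hy)).1.differentiableAt.differentiableWithinAt)
      (fun y hy => (hs y (interior_subset hy)).1.deriv ▸ (hs y (interior_subset hy)).2)
      s self_mem_Ici x hx hx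
    linarith
  refine tendsto_atBot_mono' atTop (eventually_atTop.mpr ⟨s, hle⟩) ?_
  exact tendsto_atBot_add_const_left _ _
    ((tendsto_atTop_add_const_right _ _ tendsto_id).const_mul_atTop_of_neg (neg_lt_zero.mpr hc))

noncomputable def radialWeight (a r : ℝ) : ℝ := r ^ (a - 1) * exp (-(r ^ 2 / 4))

theorem radialWeight_pos {a r : ℝ} (hr : 0 < r) : 0 < radialWeight a r := by
  unfold radialWeight; positivity

theorem hasDerivAt_radialWeight {a r : ℝ} (hr : 0 < r) :
    HasDerivAt (radialWeight a) (radialWeight a r * ((a - 1) / r - r / 2)) r := by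
  have hexp : HasDerivAt (fun x : ℝ => exp (-(x ^ 2 / 4)))
      (exp (-(r ^ 2 / 4)) * -(2 * r / 4)) r := by
    simpa using ((hasDerivAt_pow 2 r).div_const 4).neg.exp
  refine ((hasDerivAt_rpow_const (Or.inl hr.ne')).mul hexp).congr_deriv ?_
  rw [radialWeight, rpow_sub_one hr.ne']
  field_simp
  ring

theorem radialWeight_add_natCast {a r : ℝ} (hr : 0 < r) (n : ℕ) :
    radialWeight (a + n) r = radialWeight a r * r ^ n := by
  rw [radialWeight, radialWeight, add_sub_right_comm, rpow_add_natCast hr.ne']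
  ring

theorem tendsto_radialWeight_atTop (a : ℝ) : Tendsto (radialWeight a) atTop (𝓝 0) := by
  refine ((tendsto_rpow_mul_exp_neg_mul_atTop_nhds_zero ((a - 1) / 2) (1 / 4) (by norm_num)).comp
    (tendsto_pow_atTop two_ne_zero)).congr' ((eventually_ge_atTop 0).mono fun r hr => ?_)
  simp only [Function.comp, radialWeight, ← rpow_natCast, ← rpow_mul hr]
  ring_nf

theorem tendsto_radialWeight_mul_sq_sub_atTop (a b : ℝ) :
    Tendsto (fun r => radialWeight a r * (r ^ 2 - b) ^ 2) atTop (𝓝 0) := by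
  have h := ((tendsto_radialWeight_atTop (a + 4)).sub
    ((tendsto_radialWeight_atTop (a + 2)).const_mul (2 * b))).add
    ((tendsto_radialWeight_atTop a).const_mul (b ^ 2))
  simp only [mul_zero, sub_zero, add_zero] at h
  refine h.congr' ((eventually_gt_atTop 0).mono fun r hr => ?_)
  have h4 := radialWeight_add_natCast (a := a) hr 4
  have h2 := radialWeight_add_natCast (a := a) hr 2
  push_cast at h4 h2
  rw [h4, h2]
  ring

noncomputable def radialWronskian (a : ℝ) (f : ℝ → ℝ) (r : ℝ) : ℝ :=
  radialWeight a r * (f r * (2 * r) - (r ^ 2 - 2 * a) * deriv f r)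

theorem hasDerivAt_radialWronskian {a r : ℝ} {f : ℝ → ℝ} (hr : 0 < r)
    (hf : DifferentiableAt ℝ f r) (hf' : DifferentiableAt ℝ (deriv f) r)
    (hode : deriv (deriv f) r + ((a - 1) / r - r / 2) * deriv f r + f r = 0) :
    HasDerivAt (radialWronskian a f) 0 r :=
  hasDerivAt_mul_wronskian_eq_zero (q := fun r => (a - 1) / r - r / 2) (s := fun _ => 1)
    (g' := fun r => 2 * r) (g'' := fun _ => 2)
    (hasDerivAt_radialWeight hr) hf.hasDerivAt hf'.hasDerivAt
    (by simpa using (hasDerivAt_pow 2 r).sub_const (2 * a))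
    (by simpa using (hasDerivAt_id r).const_mul (2 : ℝ))
    (by linear_combination hode) (by field_simp; ring)

theorem hasDerivAt_div_sq_sub {a r : ℝ} {f : ℝ → ℝ} (hr : 0 < r) (hg : r ^ 2 - 2 * a ≠ 0)
    (hf : DifferentiableAt ℝ f r) :
    HasDerivAt (fun x => f x / (x ^ 2 - 2 * a))
      (-radialWronskian a f r / (radialWeight a r * (r ^ 2 - 2 * a) ^ 2)) r := by
  refine (hf.hasDerivAt.div ((hasDerivAt_pow 2 r).sub_const _) hg).congr_deriv ?_
  have := (radialWeight_pos (a := a) hr).ne'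
  rw [radialWronskian]
  field_simp
  ring

theorem tendsto_div_sq_sub_atBot {a c : ℝ} {f : ℝ → ℝ} (hc : 0 < c)
    (hf : ∀ᶠ r in atTop, DifferentiableAt ℝ f r ∧ radialWronskian a f r = c) :
    Tendsto (fun r => f r / (r ^ 2 - 2 * a)) atTop atBot := by
  refine tendsto_atBot_of_hasDerivAt_le_neg one_pos
    (φ' := fun r => -radialWronskian a f r / (radialWeight a r * (r ^ 2 - 2 * a) ^ 2)) ?_
  filter_upwards [hf, eventually_gt_atTop 0,
    (tendsto_pow_atTop two_ne_zero).eventually_gt_atTop (2 * a),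
    (tendsto_radialWeight_mul_sq_sub_atTop a (2 * a)).eventually (eventually_le_nhds hc)]
    with r ⟨hfr, hWr⟩ hr hg hsmall
  have hden : 0 < radialWeight a r * (r ^ 2 - 2 * a) ^ 2 :=
    mul_pos (radialWeight_pos hr) (pow_pos (sub_pos.mpr hg) 2)
  refine ⟨hasDerivAt_div_sq_sub hr (sub_pos.mpr hg).ne' hfr, ?_⟩
  rw [hWr, neg_div, neg_le_neg_iff, one_le_div hden]
  exact hsmall

theorem stmt7_general (l : ℕ) (C : ℝ) (hC0 : 0 ≤ C)
    (hC : C < Real.sqrt (2*(l : ℝ))) :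
    ¬ ∃ f : ℝ → ℝ,
      (∀ r ∈ Set.Ioi C, DifferentiableAt ℝ f r) ∧
      (∀ r ∈ Set.Ioi C, DifferentiableAt ℝ (deriv f) r) ∧
      (∀ r ∈ Set.Ioi C,
        deriv (deriv f) r + (((l : ℝ) - 1)/r - r/2) * deriv f r + f r = 0) ∧
      (∀ r ∈ Set.Ioi C, 0 < f r) := by
  rintro ⟨f, hf, hf', hode, hpos⟩
  set r₀ := √(2 * (l : ℝ))
  have hr₀ : 0 < r₀ := hC0.trans_lt hC
  have hW : ∀ r ∈ Ioi C, HasDerivAt (radialWronskian l f) 0 r := fun r hr =>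
    hasDerivAt_radialWronskian (hC0.trans_lt hr) (hf r hr) (hf' r hr) (hode r hr)
  have hWconst : ∀ r ∈ Ioi C, radialWronskian l f r = radialWronskian l f r₀ := fun r hr =>
    isOpen_Ioi.is_const_of_deriv_eq_zero isPreconnected_Ioi
      (fun x hx => (hW x hx).differentiableAt.differentiableWithinAt)
      (fun x hx => (hW x hx).deriv) hr hC
  have hc : 0 < radialWronskian l f r₀ := by
    rw [radialWronskian, sq_sqrt (by positivity), sub_self, zero_mul, sub_zero]
    exact mul_pos (radialWeight_pos hr₀) (mul_pos (hpos r₀ hC) (by positivity))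
  have hbot := tendsto_div_sq_sub_atBot hc <| (eventually_gt_atTop C).mono fun r hr =>
    ⟨hf r hr, hWconst r hr⟩
  obtain ⟨r, hneg, hrC, hg⟩ := ((hbot.eventually (eventually_lt_atBot 0)).and
    ((eventually_gt_atTop C).and
      ((tendsto_pow_atTop two_ne_zero).eventually_gt_atTop (2 * (l : ℝ))))).exists
  exact lt_asymm hneg (div_pos (hpos r hrC) (sub_pos.mpr hg))

/-- For `λ ≥ 2` and `0 ≤ C < √(2λ)` there is no twice differentiable `f` on `(C,∞)` with
`f'' + ((λ−1)/r − r/2)f' + f = 0` and `f > 0` on `(C, ∞)`. -/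
theorem stmt7 (l : ℕ) (hl : 2 ≤ l) (C : ℝ) (hC0 : 0 ≤ C)
    (hC : C < Real.sqrt (2*(l : ℝ))) :
    ¬ ∃ f : ℝ → ℝ,
      (∀ r ∈ Set.Ioi C, DifferentiableAt ℝ f r) ∧
      (∀ r ∈ Set.Ioi C, DifferentiableAt ℝ (deriv f) r) ∧
      (∀ r ∈ Set.Ioi C,
        deriv (deriv f) r + (((l : ℝ) - 1)/r - r/2) * deriv f r + f r = 0) ∧
      (∀ r ∈ Set.Ioi C, 0 < f r) :=
  stmt7_general l C hC0 hC
end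

section
/- lim_{x → √2⁻} (x² − 2)·∫₀ˣ e^{z²/4}/(z² − 2)² dz = −(1/2)·√(e/2). -/
/-!
On `[1, √2)` the integrand `e^{z²/4}/(z² − 2)²` is the derivative of
`G(z) = −e^{z²/4}/(2z(z² − 2))` plus the term `e^{z²/4}/(4z²)`, which stays bounded up to `√2`.
So `∫₀ˣ` equals `G(x)` plus a function with a finite limit at `√2`, and after multiplying by
`x² − 2 → 0` only `(x² − 2)·G(x) = −e^{x²/4}/(2x) → −e^{1/2}/(2√2)` survives.
-/

open Real Set Filter Topology MeasureTheory

theorem tendsto_mul_integral_of_hasDerivAt_sub {f g h φ : ℝ → ℝ} {a b c L : ℝ}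
    (hac : a ≤ c) (hcb : c < b) (hf : ContinuousOn f (Ico a b))
    (hg : ∀ x ∈ Ico c b, HasDerivAt g (f x - h x) x) (hh : IntervalIntegrable h volume c b)
    (hφ : Tendsto φ (𝓝[<] b) (𝓝 0)) (hφg : Tendsto (fun x ↦ φ x * g x) (𝓝[<] b) (𝓝 L)) :
    Tendsto (fun x ↦ φ x * ∫ z in a..x, f z) (𝓝[<] b) (𝓝 L) := by
  have hf_int : ∀ x ∈ Ico a b, IntervalIntegrable f volume a x := fun x hx ↦
    (hf.mono <| by rw [uIcc_of_le hx.1]; exact Icc_subset_Ico_right hx.2).intervalIntegrable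
  have hsplit : ∀ x ∈ Ioo c b,
      ∫ z in a..x, f z = g x + ((∫ z in a..c, f z) - g c + ∫ z in c..x, h z) := by
    intro x hx
    have hfa_c := hf_int c ⟨hac, hcb⟩
    have hfc_x := hfa_c.symm.trans (hf_int x ⟨hac.trans hx.1.le, hx.2⟩)
    have hhc_x : IntervalIntegrable h volume c x :=
      hh.mono_set (by rw [uIcc_of_le hx.1.le, uIcc_of_le hcb.le]; exact Icc_subset_Icc_right hx.2.le)
    have hftc : ∫ z in c..x, (f z - h z) = g x - g c :=
      intervalIntegral.integral_eq_sub_of_hasDerivAt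
        (fun z hz ↦ hg z <| by
          rw [uIcc_of_le hx.1.le] at hz; exact ⟨hz.1, hz.2.trans_lt hx.2⟩)
        (hfc_x.sub hhc_x)
    rw [← intervalIntegral.integral_add_adjacent_intervals hfa_c hfc_x]
    linarith [intervalIntegral.integral_sub hfc_x hhc_x]
  have hprim : Tendsto (fun x ↦ ∫ z in c..x, h z) (𝓝[<] b) (𝓝 (∫ z in c..b, h z)) := by
    have := intervalIntegral.continuousOn_primitive_interval' hh left_mem_uIcc b right_mem_uIcc
    rw [uIcc_of_le hcb.le] at this
    exact this.mono_of_mem_nhdsWithin (Icc_mem_nhdsLT hcb)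
  have hrest := hφ.mul (tendsto_const_nhds (x := (∫ z in a..c, f z) - g c) |>.add hprim)
  rw [zero_mul] at hrest
  refine (add_zero L ▸ hφg.add hrest).congr' ?_
  filter_upwards [Ioo_mem_nhdsLT hcb] with x hx
  rw [hsplit x hx]
  ring

theorem hasDerivAt_neg_exp_div {z : ℝ} (hz : z ≠ 0) (hz2 : z ^ 2 - 2 ≠ 0) :
    HasDerivAt (fun z ↦ -exp (z ^ 2 / 4) / (2 * z * (z ^ 2 - 2)))
      (exp (z ^ 2 / 4) / (z ^ 2 - 2) ^ 2 - exp (z ^ 2 / 4) / (4 * z ^ 2)) z := by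
  have hexp : HasDerivAt (fun z ↦ exp (z ^ 2 / 4)) (exp (z ^ 2 / 4) * (z / 2)) z := by
    convert ((hasDerivAt_pow 2 z).div_const 4).exp using 1; ring
  have hden : HasDerivAt (fun z ↦ 2 * z * (z ^ 2 - 2)) (6 * z ^ 2 - 4) z := by
    refine (((hasDerivAt_id z).const_mul 2).mul ((hasDerivAt_pow 2 z).sub_const 2)).congr_deriv ?_
    simp only [id, Nat.cast_ofNat]
    ring
  refine (hexp.neg.div hden (by positivity)).congr_deriv ?_
  simp only [Pi.neg_apply]
  field_simp
  ring

theorem continuousOn_exp_div_sq_sub_two_sq :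
    ContinuousOn (fun z : ℝ ↦ exp (z ^ 2 / 4) / (z ^ 2 - 2) ^ 2) (Ico 0 √2) := by
  refine ContinuousOn.div (by fun_prop) (by fun_prop) fun z hz ↦ ?_
  have : z ^ 2 < 2 := (lt_sqrt hz.1).1 hz.2
  exact pow_ne_zero 2 (by linarith)

theorem exp_half_div_two_sqrt_two : exp (1 / 2) / (2 * √2) = 1 / 2 * √(exp 1 / 2) := by
  rw [sqrt_div (exp_nonneg 1), ← exp_half]
  field_simp

theorem tendsto_sq_sub_two_mul_neg_exp_div :
    Tendsto (fun x ↦ (x ^ 2 - 2) * (-exp (x ^ 2 / 4) / (2 * x * (x ^ 2 - 2)))) (𝓝[<] √2)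
      (𝓝 (-(1 / 2) * √(exp 1 / 2))) := by
  have hcont : ContinuousAt (fun x ↦ -exp (x ^ 2 / 4) / (2 * x)) √2 :=
    ContinuousAt.div (by fun_prop) (by fun_prop) (by positivity)
  have hlim := hcont.tendsto.mono_left (nhdsWithin_le_nhds (s := Iio √2))
  rw [sq_sqrt zero_le_two, show (2 : ℝ) / 4 = 1 / 2 by norm_num, neg_div,
    exp_half_div_two_sqrt_two, ← neg_mul] at hlim
  refine hlim.congr' ?_
  filter_upwards [Ioo_mem_nhdsLT (sqrt_pos.2 zero_lt_two)] with x hx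
  have : x ^ 2 - 2 ≠ 0 := by linarith [(lt_sqrt hx.1.le).1 hx.2]
  field_simp

/-- `lim_{x → √2⁻} (x² − 2)·∫₀ˣ e^{z²/4}/(z² − 2)² dz = −(1/2)·√(e/2)`. -/
theorem stmt9 :
    Filter.Tendsto
      (fun x : ℝ => (x^2 - 2) * ∫ z in (0:ℝ)..x, Real.exp (z^2/4) / (z^2 - 2)^2)
      (nhdsWithin (Real.sqrt 2) (Set.Iio (Real.sqrt 2)))
      (nhds (-(1/2) * Real.sqrt (Real.exp 1 / 2))) := by
  refine tendsto_mul_integral_of_hasDerivAt_sub (h := fun z ↦ exp (z ^ 2 / 4) / (4 * z ^ 2))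
    zero_le_one one_lt_sqrt_two continuousOn_exp_div_sq_sub_two_sq
    (fun x hx ↦ hasDerivAt_neg_exp_div ?_ ?_) ?_ ?_ tendsto_sq_sub_two_mul_neg_exp_div
  · linarith [hx.1]
  · linarith [(lt_sqrt (zero_le_one.trans hx.1)).1 hx.2]
  · refine ContinuousOn.intervalIntegrable fun z hz ↦ ?_
    rw [uIcc_of_le one_lt_sqrt_two.le] at hz
    have : z ≠ 0 := by linarith [hz.1]
    fun_prop (disch := positivity)
  · simpa using ((by fun_prop : Continuous fun x : ℝ ↦ x ^ 2 - 2).tendsto √2).mono_left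
      nhdsWithin_le_nhds
end

section
/- Let λ ≥ 2 be an integer. Then lim_{r → √(2λ)⁻} (r² − 2λ)·∫₁ʳ e^{s²/4}/(s^{λ−1}·(s² − 2λ)²) ds = −(1/2)·(e/(2λ))^{λ/2}. -/
/-!
The integrand is `φ(s) · (-(s² - 2λ)⁻¹)'` with `φ(s) = e^{s²/4} / (2 s^λ)`, and
`φ'(s) = e^{s²/4} (s² - 2λ) / (4 s^{λ+1})` carries the factor `s² - 2λ`. Integrating by parts
therefore writes `(r² - 2λ) ∫₁ʳ` as `-φ(r)` plus `(r² - 2λ)` times a quantity that stays bounded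
as `r → √(2λ)`, so the limit is `-φ(√(2λ)) = -½ (e / 2λ)^{λ/2}`.
-/

open Real Set Filter Topology intervalIntegral

lemma hasDerivAt_neg_inv_sq_sub (c : ℝ) {x : ℝ} (hx : x ^ 2 - c ≠ 0) :
    HasDerivAt (fun s : ℝ => -(s ^ 2 - c)⁻¹) (2 * x / (x ^ 2 - c) ^ 2) x := by
  refine (((hasDerivAt_pow 2 x).sub_const c).inv hx).neg.congr_deriv ?_
  field_simp
  ring

theorem mul_integral_mul_two_mul_div_sq_sub_sq {φ h : ℝ → ℝ} {a b c : ℝ}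
    (hφ : ∀ x ∈ uIcc a b, HasDerivAt φ (-(x ^ 2 - c) * h x) x)
    (hh : ContinuousOn h (uIcc a b)) (hc : ∀ x ∈ uIcc a b, x ^ 2 - c ≠ 0) :
    (b ^ 2 - c) * ∫ x in a..b, φ x * (2 * x / (x ^ 2 - c) ^ 2)
      = -φ b + (b ^ 2 - c) * (φ a / (a ^ 2 - c) - ∫ x in a..b, h x) := by
  have hφ' : IntervalIntegrable (fun x => -(x ^ 2 - c) * h x) MeasureTheory.volume a b :=
    ((by fun_prop : Continuous fun x : ℝ => -(x ^ 2 - c)).continuousOn.mul hh).intervalIntegrable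
  have hv' : IntervalIntegrable (fun x : ℝ => 2 * x / (x ^ 2 - c) ^ 2) MeasureTheory.volume a b :=
    (ContinuousOn.div (by fun_prop) (by fun_prop)
      fun x hx => pow_ne_zero 2 (hc x hx)).intervalIntegrable
  have hparts := integral_mul_deriv_eq_deriv_mul hφ
    (fun x hx => hasDerivAt_neg_inv_sq_sub c (hc x hx)) hφ' hv'
  have hcancel : ∫ x in a..b, -(x ^ 2 - c) * h x * -(x ^ 2 - c)⁻¹ = ∫ x in a..b, h x :=
    integral_congr fun x hx => by field_simp [hc x hx]
  have hb : b ^ 2 - c ≠ 0 := hc b right_mem_uIcc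
  rw [hparts, hcancel]
  field_simp
  ring

theorem tendsto_sub_sq_mul_integral_mul_two_mul_div_sq_sub_sq {φ h : ℝ → ℝ} {a ρ : ℝ}
    (ha : 0 ≤ a) (haρ : a < ρ)
    (hφ : ∀ x ∈ Icc a ρ, HasDerivAt φ (-(x ^ 2 - ρ ^ 2) * h x) x)
    (hh : ContinuousOn h (Icc a ρ)) :
    Tendsto (fun r => (r ^ 2 - ρ ^ 2) * ∫ x in a..r, φ x * (2 * x / (x ^ 2 - ρ ^ 2) ^ 2))
      (𝓝[<] ρ) (𝓝 (-φ ρ)) := by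
  have hprim : Tendsto (fun r => ∫ x in a..r, h x) (𝓝[<] ρ) (𝓝 (∫ x in a..ρ, h x)) := by
    have hIcc : uIcc a ρ = Icc a ρ := uIcc_of_le haρ.le
    have := continuousOn_primitive_interval (μ := MeasureTheory.volume)
      (hIcc ▸ hh).integrableOn_uIcc
    exact (this ρ right_mem_uIcc).tendsto.mono_left
      (nhdsWithin_le_of_mem (hIcc ▸ Icc_mem_nhdsLT haρ))
  have hzero : Tendsto (fun r : ℝ => r ^ 2 - ρ ^ 2) (𝓝[<] ρ) (𝓝 0) := by
    have : Tendsto (fun r : ℝ => r ^ 2 - ρ ^ 2) (𝓝 ρ) (𝓝 (ρ ^ 2 - ρ ^ 2)) :=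
      (by fun_prop : Continuous fun r : ℝ => r ^ 2 - ρ ^ 2).tendsto ρ
    exact (sub_self (ρ ^ 2) ▸ this).mono_left nhdsWithin_le_nhds
  have hφρ : Tendsto φ (𝓝[<] ρ) (𝓝 (φ ρ)) :=
    (hφ ρ (right_mem_Icc.2 haρ.le)).continuousAt.tendsto.mono_left nhdsWithin_le_nhds
  have hlim := hφρ.neg.add
    (hzero.mul ((tendsto_const_nhds (x := φ a / (a ^ 2 - ρ ^ 2))).sub hprim))
  rw [zero_mul, add_zero] at hlim
  refine hlim.congr' ?_
  filter_upwards [Ioo_mem_nhdsLT haρ] with r hr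
  have hsub : uIcc a r ⊆ Icc a ρ := by
    rw [uIcc_of_le hr.1.le]; exact Icc_subset_Icc_right hr.2.le
  refine (mul_integral_mul_two_mul_div_sq_sub_sq (fun x hx => hφ x (hsub hx))
    (hh.mono hsub) fun x hx => ?_).symm
  rw [uIcc_of_le hr.1.le] at hx
  nlinarith [hx.1, hx.2, hr.2]

lemma hasDerivAt_exp_sq_div_four_div_pow (k : ℕ) {x : ℝ} (hx : x ≠ 0) :
    HasDerivAt (fun s => exp (s ^ 2 / 4) / (2 * s ^ (k + 1)))
      (-(x ^ 2 - 2 * (k + 1)) * -(exp (x ^ 2 / 4) / (4 * x ^ (k + 2)))) x := by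
  have hexp : HasDerivAt (fun s => exp (s ^ 2 / 4)) (exp (x ^ 2 / 4) * (↑2 * x ^ 1 / 4)) x :=
    ((hasDerivAt_pow 2 x).div_const 4).exp
  have hpow : HasDerivAt (fun s => 2 * s ^ (k + 1)) (2 * (↑(k + 1) * x ^ k)) x :=
    (hasDerivAt_pow (k + 1) x).const_mul 2
  refine (hexp.div hpow (by positivity)).congr_deriv ?_
  field_simp
  push_cast
  ring

lemma exp_sq_div_four_div_pow_sqrt (l : ℕ) :
    exp (√(2 * l) ^ 2 / 4) / (2 * √(2 * l) ^ l) = 1 / 2 * (exp 1 / (2 * l)) ^ ((l : ℝ) / 2) := by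
  have hl : (0 : ℝ) ≤ 2 * l := by positivity
  have hpow : √(2 * l) ^ l = (2 * l : ℝ) ^ ((l : ℝ) / 2) := by
    rw [sqrt_eq_rpow, ← rpow_natCast, ← rpow_mul hl]
    ring_nf
  rw [sq_sqrt hl, hpow, div_rpow (exp_pos 1).le hl, exp_one_rpow]
  ring_nf

/-- For `λ ≥ 2`,
`lim_{r → √(2λ)⁻} (r² − 2λ)·∫₁ʳ e^{s²/4}/(s^{λ−1}(s² − 2λ)²) ds = −(1/2)(e/(2λ))^{λ/2}`. -/
theorem stmt11 (l : ℕ) (hl : 2 ≤ l) :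
    Filter.Tendsto
      (fun r : ℝ => (r^2 - 2*(l : ℝ)) *
        ∫ s in (1:ℝ)..r, Real.exp (s^2/4) / (s^(l-1) * (s^2 - 2*(l : ℝ))^2))
      (nhdsWithin (Real.sqrt (2*(l : ℝ))) (Set.Iio (Real.sqrt (2*(l : ℝ)))))
      (nhds (-(1/2) * (Real.exp 1 / (2*(l : ℝ))) ^ ((l : ℝ)/2))) := by
  obtain ⟨k, rfl⟩ : ∃ k, l = k + 1 := ⟨l - 1, by omega⟩
  set ρ := √(2 * ((k + 1 : ℕ) : ℝ))
  have hρ2 : ρ ^ 2 = 2 * ((k + 1 : ℕ) : ℝ) := sq_sqrt (by positivity)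
  have hρ1 : 1 < ρ := by
    rw [lt_sqrt zero_le_one]; push_cast; linarith
  have hlim := tendsto_sub_sq_mul_integral_mul_two_mul_div_sq_sub_sq zero_le_one hρ1
    (fun x hx => by
      rw [hρ2]; push_cast; exact hasDerivAt_exp_sq_div_four_div_pow k (by linarith [hx.1]))
    (ContinuousOn.neg <| ContinuousOn.div (by fun_prop) (by fun_prop) fun x hx =>
      (mul_pos four_pos (pow_pos (zero_lt_one.trans_le hx.1) _)).ne')
  rw [exp_sq_div_four_div_pow_sqrt, ← neg_mul] at hlim
  refine hlim.congr' ?_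
  filter_upwards [Ioo_mem_nhdsLT (zero_lt_one.trans hρ1)] with r hr
  rw [hρ2, Nat.add_sub_cancel]
  congr 1
  refine integral_congr fun s hs => ?_
  have hs : 0 < s := lt_of_lt_of_le (lt_min zero_lt_one hr.1) hs.1
  field_simp
  ring
end
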